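/- For every u ∈ U: Q^qnl(u) ≥ A_F ‖Du‖²_{ℓ²ε}. -/

import Mathlib

/-!
Summed over a period, the continuum density `A_F/2 ((u'_ℓ)² + (u'_{ℓ+1})²)` gives exactly
`A_F ‖Du‖²`, because `Du` is periodic; so it suffices to compare every site with it. For an
atomistic site, `q^a_ℓ` minus the continuum density minus the increment `T_{ℓ+1} - T_ℓ` of a
quadratic corrector `T_ℓ = T(u'_{ℓ-1}, u'_ℓ, u'_{ℓ+1})` is a sum of squares with coefficients
`B_F/2`, `G''_F ρ'_{2F}(2ρ'_{2F} + ρ'_F)` and `G''_F`, all nonnegative under (H1), (H2). The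
increments telescope across the atomistic region, and on each side the two interface sites
dominate their continuum densities plus (resp. minus) the boundary value of the corrector, again
by a sum of squares.
-/

open Finset

noncomputable section

/-- `u` is `2N`-periodic. -/
def IsPer (N : ℤ) (u : ℤ → ℝ) : Prop := ∀ ℓ : ℤ, u (ℓ + 2*N) = u ℓ

/-- `u` belongs to the displacement space `U`: `2N`-periodic with zero mean. -/
def InU (N : ℤ) (u : ℤ → ℝ) : Prop :=
  IsPer N u ∧ ∑ ℓ ∈ Finset.Icc (-N+1) N, u ℓ = 0

/-- the scaled reference atomic spacing `ε = 1/N`. -/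
def eps (N : ℤ) : ℝ := 1 / (N : ℝ)

/-- discrete derivative `(Dv)_ℓ = (v_ℓ - v_{ℓ-1})/ε`. -/
def Dd (N : ℤ) (v : ℤ → ℝ) : ℤ → ℝ := fun ℓ => (v ℓ - v (ℓ-1)) / eps N

/-- squared `ℓ²ε` norm: `ε Σ_{ℓ=-N+1}^{N} v_ℓ²`. -/
def nrm2 (N : ℤ) (v : ℤ → ℝ) : ℝ := eps N * ∑ ℓ ∈ Finset.Icc (-N+1) N, (v ℓ)^2

/-- `Ã_F = φ''_F + 4φ''_{2F}`. -/
def Atil (pF p2F : ℝ) : ℝ := pF + 4*p2F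

/-- `Â_F = 4G''_F(ρ'_F+2ρ'_{2F})² + 2G'_F(ρ''_F+4ρ''_{2F})`. -/
def Ahat (rF r2F rrF rr2F g1 g2 : ℝ) : ℝ := 4*g2*(rF + 2*r2F)^2 + 2*g1*(rrF + 4*rr2F)

/-- `A_F = Â_F + Ã_F`. -/
def AFc (pF p2F rF r2F rrF rr2F g1 g2 : ℝ) : ℝ := Ahat rF r2F rrF rr2F g1 g2 + Atil pF p2F

/-- `B_F`. -/
def BFc (p2F rF r2F rr2F g1 g2 : ℝ) : ℝ :=
  -(p2F + g2*(rF^2 + 20*r2F^2 + 12*rF*r2F) + 2*g1*rr2F)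

/-- `C_F`. -/
def CFc (rF r2F g2 : ℝ) : ℝ := g2*(8*r2F^2 + 2*rF*r2F)

/-- `D_F`. -/
def DFc (r2F g2 : ℝ) : ℝ := -(g2*r2F^2)

/-- `λ_F(s) = A_F + B_F s + C_F s² + D_F s³`. -/
def lamF (pF p2F rF r2F rrF rr2F g1 g2 s : ℝ) : ℝ :=
  AFc pF p2F rF r2F rrF rr2F g1 g2 + BFc p2F rF r2F rr2F g1 g2 * s
    + CFc rF r2F g2 * s^2 + DFc r2F g2 * s^3

/-- per-atom atomistic contribution `q^a_ℓ(u)`. -/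
def qaAtom (N : ℤ) (pF p2F rF r2F rrF rr2F g1 g2 : ℝ) (u : ℤ → ℝ) (ℓ : ℤ) : ℝ :=
  g2 * (rF * (Dd N u ℓ + Dd N u (ℓ+1))
      + r2F * (Dd N u (ℓ-1) + Dd N u ℓ + Dd N u (ℓ+1) + Dd N u (ℓ+2)))^2
   + g1 * (rrF * (Dd N u ℓ)^2 + rr2F * (Dd N u ℓ + Dd N u (ℓ-1))^2
         + rrF * (Dd N u (ℓ+1))^2 + rr2F * (Dd N u (ℓ+1) + Dd N u (ℓ+2))^2)
   + (1/2) * (pF * ((Dd N u ℓ)^2 + (Dd N u (ℓ+1))^2)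
         + p2F * ((Dd N u ℓ + Dd N u (ℓ-1))^2 + (Dd N u (ℓ+1) + Dd N u (ℓ+2))^2))

/-- interfacial contribution `q^i` with index triple `(a,b,c)`. -/
def qiAtom (N : ℤ) (pF p2F rF r2F rrF rr2F g1 g2 : ℝ) (u : ℤ → ℝ) (a b c : ℤ) : ℝ :=
  2*g2*(rF * Dd N u b + r2F*(Dd N u b + Dd N u a))^2
  + g1*(rrF*(Dd N u b)^2 + rr2F*(Dd N u b + Dd N u a)^2)
  + (2*g2*(rF + 2*r2F)^2 + g1*(rrF + 4*rr2F))*(Dd N u c)^2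
  + (1/2)*(pF*((Dd N u b)^2 + (Dd N u c)^2) + p2F*((Dd N u b + Dd N u a)^2 + 4*(Dd N u c)^2))

/-- continuum contribution `q^c_ℓ(u) = (A_F/2)((u'_ℓ)² + (u'_{ℓ+1})²)`. -/
def qcAtom (N : ℤ) (pF p2F rF r2F rrF rr2F g1 g2 : ℝ) (u : ℤ → ℝ) (ℓ : ℤ) : ℝ :=
  (AFc pF p2F rF r2F rrF rr2F g1 g2 / 2) * ((Dd N u ℓ)^2 + (Dd N u (ℓ+1))^2)

/-- the QNL second-variation quadratic form `Q^qnl`. -/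
def Qqnl (N K : ℤ) (pF p2F rF r2F rrF rr2F g1 g2 : ℝ) (u : ℤ → ℝ) : ℝ :=
  eps N * ((∑ ℓ ∈ Finset.Icc (-K) K, qaAtom N pF p2F rF r2F rrF rr2F g1 g2 u ℓ)
    + qiAtom N pF p2F rF r2F rrF rr2F g1 g2 u K (K+1) (K+2)
    + qiAtom N pF p2F rF r2F rrF rr2F g1 g2 u (K+1) (K+2) (K+3)
    + qiAtom N pF p2F rF r2F rrF rr2F g1 g2 u (-K+1) (-K) (-K-1)
    + qiAtom N pF p2F rF r2F rrF rr2F g1 g2 u (-K) (-K-1) (-K-2)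
    + ∑ ℓ ∈ (Finset.Icc (-N+1) (-K-3) ∪ Finset.Icc (K+3) N),
        qcAtom N pF p2F rF r2F rrF rr2F g1 g2 u ℓ)


section IntervalSums

variable {M : Type*} [AddCommGroup M]

theorem sum_Icc_sub_eq (t : ℤ → M) {a b : ℤ} (hab : a ≤ b) :
    ∑ ℓ ∈ Icc a b, (t (ℓ + 1) - t ℓ) = t (b + 1) - t a := by
  induction b, hab using Int.leInduction with
  | base => simp
  | succ b hab ih =>
    rw [← insert_Icc_right_eq_Icc_add_one (by omega), sum_insert (by simp), ih]
    abel

theorem sum_Icc_comp_add_one_of_eq {f : ℤ → M} {a b : ℤ} (hab : a ≤ b) (hf : f (b + 1) = f a) :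
    ∑ ℓ ∈ Icc a b, f (ℓ + 1) = ∑ ℓ ∈ Icc a b, f ℓ := by
  rw [← sub_eq_zero, ← sum_sub_distrib, sum_Icc_sub_eq f hab, hf, sub_self]

theorem sum_Icc_split_around_Icc (f : ℤ → M) {m n a b : ℤ}
    (hm : m ≤ a - 2) (hab : a ≤ b + 1) (hn : b + 2 ≤ n) :
    ∑ ℓ ∈ Icc m n, f ℓ
      = ∑ ℓ ∈ Icc m (a - 3) ∪ Icc (b + 3) n, f ℓ + f (a - 2) + f (a - 1)
        + ∑ ℓ ∈ Icc a b, f ℓ + f (b + 1) + f (b + 2) := by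
  have hdecomp : Icc m n = insert (a - 2) (insert (a - 1) (insert (b + 1) (insert (b + 2)
      (Icc a b ∪ (Icc m (a - 3) ∪ Icc (b + 3) n))))) := by
    ext ℓ; simp only [mem_Icc, mem_insert, mem_union]; omega
  rw [hdecomp, sum_insert, sum_insert, sum_insert, sum_insert, sum_union]
  · abel
  all_goals simp only [mem_Icc, mem_insert, mem_union, disjoint_left]; omega

end IntervalSums

section LocalBounds

variable (pF p2F rF r2F rrF rr2F g1 g2 : ℝ)

/-- `qaAtom` as a polynomial in the four strains `u'_{ℓ-1}, …, u'_{ℓ+2}` it depends on. -/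
def qaPoly (a b c d : ℝ) : ℝ :=
  g2 * (rF * (b + c) + r2F * (a + b + c + d))^2
   + g1 * (rrF * b^2 + rr2F * (b + a)^2 + rrF * c^2 + rr2F * (c + d)^2)
   + (1/2) * (pF * (b^2 + c^2) + p2F * ((b + a)^2 + (c + d)^2))

/-- `qiAtom` with index triple `(a, b, c)`, as a polynomial in `u'_a, u'_b, u'_c`. -/
def qiPoly (a b c : ℝ) : ℝ :=
  2*g2*(rF * b + r2F*(b + a))^2
  + g1*(rrF*b^2 + rr2F*(b + a)^2)
  + (2*g2*(rF + 2*r2F)^2 + g1*(rrF + 4*rr2F))*c^2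
  + (1/2)*(pF*(b^2 + c^2) + p2F*((b + a)^2 + 4*c^2))

def qnlCorrector (x y z : ℝ) : ℝ :=
  (p2F + 2*g1*rr2F)*(z^2 - x^2)
  + g2*((8*r2F^2 + 5*rF*r2F + rF^2/2)*(z^2 - x^2) + (8*r2F^2 + 6*rF*r2F + rF^2)*(x*y - y*z))

theorem qnlCorrector_swap (x y z : ℝ) :
    qnlCorrector p2F rF r2F rr2F g1 g2 z y x = -qnlCorrector p2F rF r2F rr2F g1 g2 x y z := by
  unfold qnlCorrector; ring

variable {rF r2F g2}

theorem le_qaPoly (hrF : rF ≤ 0) (hr2F : r2F ≤ 0) (hg2 : 0 ≤ g2)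
    (hB : 0 ≤ BFc p2F rF r2F rr2F g1 g2) (a b c d : ℝ) :
    AFc pF p2F rF r2F rrF rr2F g1 g2 / 2 * (b^2 + c^2)
      + (qnlCorrector p2F rF r2F rr2F g1 g2 b c d - qnlCorrector p2F rF r2F rr2F g1 g2 a b c)
    ≤ qaPoly pF p2F rF r2F rrF rr2F g1 g2 a b c d := by
  have hr : 0 ≤ r2F * (2*r2F + rF) := mul_nonneg_of_nonpos_of_nonpos hr2F (by linarith)
  have hsos : qaPoly pF p2F rF r2F rrF rr2F g1 g2 a b c d
      - (AFc pF p2F rF r2F rrF rr2F g1 g2 / 2 * (b^2 + c^2)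
        + (qnlCorrector p2F rF r2F rr2F g1 g2 b c d - qnlCorrector p2F rF r2F rr2F g1 g2 a b c))
      = BFc p2F rF r2F rr2F g1 g2 / 2 * ((b - a)^2 + (d - c)^2)
        + g2 * (r2F * (2*r2F + rF)) * ((c - 2*b + a)^2 + (d - 2*c + b)^2)
        + g2 * (r2F * ((c - 2*b + a) + (d - 2*c + b)))^2 := by
    unfold qaPoly AFc Ahat Atil BFc qnlCorrector; ring
  have h₁ := mul_nonneg hB (add_nonneg (sq_nonneg (b - a)) (sq_nonneg (d - c)))
  have h₂ := mul_nonneg (mul_nonneg hg2 hr)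
    (add_nonneg (sq_nonneg (c - 2*b + a)) (sq_nonneg (d - 2*c + b)))
  have h₃ := mul_nonneg hg2 (sq_nonneg (r2F * ((c - 2*b + a) + (d - 2*c + b))))
  linarith

theorem le_qiPoly_add_qiPoly (hrF : rF ≤ 0) (hr2F : r2F ≤ 0) (hg2 : 0 ≤ g2)
    (hB : 0 ≤ BFc p2F rF r2F rr2F g1 g2) (a b c d : ℝ) :
    AFc pF p2F rF r2F rrF rr2F g1 g2 / 2 * ((b^2 + c^2) + (c^2 + d^2))
    ≤ qiPoly pF p2F rF r2F rrF rr2F g1 g2 a b c + qiPoly pF p2F rF r2F rrF rr2F g1 g2 b c d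
      + qnlCorrector p2F rF r2F rr2F g1 g2 a b c := by
  have hr : 0 ≤ rF * r2F := mul_nonneg_of_nonpos_of_nonpos hrF hr2F
  have hsos : qiPoly pF p2F rF r2F rrF rr2F g1 g2 a b c + qiPoly pF p2F rF r2F rrF rr2F g1 g2 b c d
      + qnlCorrector p2F rF r2F rr2F g1 g2 a b c
      - AFc pF p2F rF r2F rrF rr2F g1 g2 / 2 * ((b^2 + c^2) + (c^2 + d^2))
      = BFc p2F rF r2F rr2F g1 g2 / 2 * ((b - a)^2 + (c - b)^2)
        + g2 * (r2F^2 * (4*(a - b)^2 + 12*(c - b)^2) + (rF*r2F) * ((a - b)^2 + 7*(c - b)^2)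
          + rF^2 * (c - b)^2) := by
    unfold qiPoly AFc Ahat Atil BFc qnlCorrector; ring
  have h₁ := mul_nonneg hB (add_nonneg (sq_nonneg (b - a)) (sq_nonneg (c - b)))
  have h₂ : 0 ≤ g2 * (r2F^2 * (4*(a - b)^2 + 12*(c - b)^2) + (rF*r2F) * ((a - b)^2 + 7*(c - b)^2)
      + rF^2 * (c - b)^2) :=
    mul_nonneg hg2 (add_nonneg (add_nonneg (by positivity) (mul_nonneg hr (by positivity)))
      (by positivity))
  linarith

theorem sum_Icc_le_sum_qaPoly (hrF : rF ≤ 0) (hr2F : r2F ≤ 0) (hg2 : 0 ≤ g2)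
    (hB : 0 ≤ BFc p2F rF r2F rr2F g1 g2) (v : ℤ → ℝ) {a b : ℤ} (hab : a ≤ b) :
    ∑ ℓ ∈ Icc a b, AFc pF p2F rF r2F rrF rr2F g1 g2 / 2 * ((v ℓ)^2 + (v (ℓ+1))^2)
      + (qnlCorrector p2F rF r2F rr2F g1 g2 (v b) (v (b+1)) (v (b+2))
        - qnlCorrector p2F rF r2F rr2F g1 g2 (v (a-1)) (v a) (v (a+1)))
    ≤ ∑ ℓ ∈ Icc a b,
        qaPoly pF p2F rF r2F rrF rr2F g1 g2 (v (ℓ-1)) (v ℓ) (v (ℓ+1)) (v (ℓ+2)) := by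
  have htel := sum_Icc_sub_eq
    (fun ℓ ↦ qnlCorrector p2F rF r2F rr2F g1 g2 (v (ℓ-1)) (v ℓ) (v (ℓ+1))) hab
  simp only [add_sub_cancel_right, add_assoc, one_add_one_eq_two] at htel
  rw [← htel, ← sum_add_distrib]
  exact sum_le_sum fun ℓ _ ↦ le_qaPoly pF p2F rrF rr2F g1 hrF hr2F hg2 hB _ _ _ _

theorem AFc_mul_sum_sq_le (N K : ℤ) (hK0 : 0 ≤ K) (hKN : K + 3 ≤ N)
    (hrF : rF ≤ 0) (hr2F : r2F ≤ 0) (hg2 : 0 ≤ g2) (hB : 0 ≤ BFc p2F rF r2F rr2F g1 g2)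
    (v : ℤ → ℝ) (hv : v (N + 1) = v (-N + 1)) :
    AFc pF p2F rF r2F rrF rr2F g1 g2 * ∑ ℓ ∈ Icc (-N+1) N, (v ℓ)^2
    ≤ (∑ ℓ ∈ Icc (-K) K,
          qaPoly pF p2F rF r2F rrF rr2F g1 g2 (v (ℓ-1)) (v ℓ) (v (ℓ+1)) (v (ℓ+2)))
      + qiPoly pF p2F rF r2F rrF rr2F g1 g2 (v K) (v (K+1)) (v (K+2))
      + qiPoly pF p2F rF r2F rrF rr2F g1 g2 (v (K+1)) (v (K+2)) (v (K+3))
      + qiPoly pF p2F rF r2F rrF rr2F g1 g2 (v (-K+1)) (v (-K)) (v (-K-1))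
      + qiPoly pF p2F rF r2F rrF rr2F g1 g2 (v (-K)) (v (-K-1)) (v (-K-2))
      + ∑ ℓ ∈ Icc (-N+1) (-K-3) ∪ Icc (K+3) N,
          AFc pF p2F rF r2F rrF rr2F g1 g2 / 2 * ((v ℓ)^2 + (v (ℓ+1))^2) := by
  set A := AFc pF p2F rF r2F rrF rr2F g1 g2
  set pair : ℤ → ℝ := fun ℓ ↦ A / 2 * ((v ℓ)^2 + (v (ℓ+1))^2)
  have hperiod : A * ∑ ℓ ∈ Icc (-N+1) N, (v ℓ)^2 = ∑ ℓ ∈ Icc (-N+1) N, pair ℓ := by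
    have hshift := sum_Icc_comp_add_one_of_eq (f := fun ℓ ↦ (v ℓ)^2) (by omega)
      (by simp only [hv] : (v (N + 1))^2 = (v (-N + 1))^2)
    simp only [pair, ← mul_sum, sum_add_distrib, hshift]
    ring
  have hsplit := sum_Icc_split_around_Icc pair (m := -N+1) (n := N) (a := -K) (b := K)
    (by omega) (by omega) (by omega)
  have hatom := sum_Icc_le_sum_qaPoly pF p2F rrF rr2F g1 hrF hr2F hg2 hB v (by omega : -K ≤ K)
  have hright := le_qiPoly_add_qiPoly pF p2F rrF rr2F g1 hrF hr2F hg2 hB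
    (v K) (v (K+1)) (v (K+2)) (v (K+3))
  have hleft := le_qiPoly_add_qiPoly pF p2F rrF rr2F g1 hrF hr2F hg2 hB
    (v (-K+1)) (v (-K)) (v (-K-1)) (v (-K-2))
  rw [qnlCorrector_swap] at hleft
  simp only [pair, show -K - 2 + 1 = -K - 1 by ring, show -K - 1 + 1 = -K by ring,
    show K + 1 + 1 = K + 2 by ring, show K + 2 + 1 = K + 3 by ring] at hsplit hperiod ⊢
  linarith

end LocalBounds

theorem qnl_stability_lower_bound_general (N K : ℤ) (hK0 : 0 ≤ K) (hKN : K + 3 ≤ N)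
    (pF p2F rF r2F rrF rr2F g1 g2 : ℝ)
    (hH1c : rF ≤ 0) (hH1d : r2F ≤ 0) (hH1g : 0 ≤ g2)
    (hH2 : 0 ≤ BFc p2F rF r2F rr2F g1 g2) :
    ∀ u : ℤ → ℝ, InU N u →
      AFc pF p2F rF r2F rrF rr2F g1 g2 * nrm2 N (Dd N u)
        ≤ Qqnl N K pF p2F rF r2F rrF rr2F g1 g2 u := by
  intro u hu
  have hDu : Dd N u (N + 1) = Dd N u (-N + 1) := by
    unfold Dd
    rw [show N + 1 = -N + 1 + 2 * N by ring, show -N + 1 + 2 * N - 1 = -N + 1 - 1 + 2 * N by ring,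
      hu.1, hu.1]
  have hε : 0 ≤ eps N := by
    unfold eps
    have : (0 : ℝ) ≤ N := by exact_mod_cast (by omega : (0 : ℤ) ≤ N)
    positivity
  unfold nrm2 Qqnl
  rw [mul_left_comm]
  exact mul_le_mul_of_nonneg_left
    (AFc_mul_sum_sq_le pF p2F rrF rr2F g1 N K hK0 hKN hH1c hH1d hH1g hH2 _ hDu) hε

/-- lower bound for `Q^qnl`. -/
theorem qnl_stability_lower_bound (N K : ℤ) (hK0 : 0 ≤ K) (hKN : K + 3 ≤ N)
    (pF p2F rF r2F rrF rr2F g1 g2 : ℝ)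
    (hH1a : 0 < pF) (hH1b : p2F < 0) (hH1c : rF ≤ 0) (hH1d : r2F ≤ 0)
    (hH1e : 0 ≤ rrF) (hH1f : 0 ≤ rr2F) (hH1g : 0 ≤ g2)
    (hH2 : 0 ≤ BFc p2F rF r2F rr2F g1 g2) :
    ∀ u : ℤ → ℝ, InU N u →
      AFc pF p2F rF r2F rrF rr2F g1 g2 * nrm2 N (Dd N u)
        ≤ Qqnl N K pF p2F rF r2F rrF rr2F g1 g2 u :=
  qnl_stability_lower_bound_general N K hK0 hKN pF p2F rF r2F rrF rr2F g1 g2 hH1c hH1d hH1g hH2
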